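/- arXiv:1212.0523 — 7 statements merged into one kernel-verified Lean document; each statement's English description precedes it below -/
import Mathlib

section
/- Let T be a maximal monotone operator on a real Hilbert space H, and let ε₁, ε₂ ≥ 0. For any (x,u) in the ε₁-enlargement of T and any (y,v) in the ε₂-enlargement of T, one has ⟨v - u, y - x⟩ ≥ -(√ε₁ + √ε₂)². -/
open RealInnerProductSpace

lemma inner_convex_id {H : Type*} [NormedAddCommGroup H] [InnerProductSpace ℝ H]
    (t : ℝ) (x u y v p₁ p₂ : H) :
    ⟪p₂ - (t•u+(1-t)•v), p₁ - (t•x+(1-t)•y)⟫ =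
      t*⟪p₂-u,p₁-x⟫ + (1-t)*⟪p₂-v,p₁-y⟫ - t*(1-t)*⟪v-u,y-x⟫ := by
  simp only [inner_sub_left, inner_sub_right, inner_add_left, inner_add_right,
    real_inner_smul_left, real_inner_smul_right]
  ring

/-- transportation inequality for ε-enlargements of a maximal
monotone operator on a real Hilbert space. -/
theorem stmt_0 {H : Type*} [NormedAddCommGroup H] [InnerProductSpace ℝ H] [CompleteSpace H]
    (T : Set (H × H))
    (hmono : ∀ p ∈ T, ∀ q ∈ T, 0 ≤ ⟪q.2 - p.2, q.1 - p.1⟫)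
    (hmax : ∀ S : Set (H × H),
      (∀ p ∈ S, ∀ q ∈ S, 0 ≤ ⟪q.2 - p.2, q.1 - p.1⟫) → T ⊆ S → S = T)
    (ε₁ ε₂ : ℝ) (hε₁ : 0 ≤ ε₁) (hε₂ : 0 ≤ ε₂)
    (x u y v : H)
    (hu : ∀ p ∈ T, ⟪p.2 - u, p.1 - x⟫ ≥ -ε₁)
    (hv : ∀ p ∈ T, ⟪p.2 - v, p.1 - y⟫ ≥ -ε₂) :
    ⟪v - u, y - x⟫ ≥ -(Real.sqrt ε₁ + Real.sqrt ε₂) ^ 2 := by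
  set ρ : ℝ := ⟪v - u, y - x⟫ with hρ
  -- Key claim: for all t ∈ [0,1], 0 ≤ t*ε₁ + (1-t)*ε₂ + t*(1-t)*ρ
  have key : ∀ t : ℝ, 0 ≤ t → t ≤ 1 → 0 ≤ t*ε₁ + (1-t)*ε₂ + t*(1-t)*ρ := by
    intro t ht0 ht1
    by_contra hneg
    push_neg at hneg
    set z : H := t•x + (1-t)•y with hz
    set w : H := t•u + (1-t)•v with hw
    set e : ℝ := t*ε₁ + (1-t)*ε₂ + t*(1-t)*ρ with he
    have hkey : ∀ p ∈ T, ⟪p.2 - w, p.1 - z⟫ ≥ -e := by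
      intro p hp
      rw [hz, hw, inner_convex_id t x u y v p.1 p.2]
      have h1 := hu p hp
      have h2 := hv p hp
      nlinarith [mul_nonneg ht0 (sub_nonneg.mpr ht1)]
    have hmonoS : ∀ p ∈ insert (z, w) T, ∀ q ∈ insert (z, w) T,
        0 ≤ ⟪q.2 - p.2, q.1 - p.1⟫ := by
      intro p hp q hq
      rcases Set.mem_insert_iff.mp hp with hp' | hp' <;>
        rcases Set.mem_insert_iff.mp hq with hq' | hq'
      · subst hp'; subst hq'; simp
      · subst hp'
        have := hkey q hq'
        simp only at this ⊢
        linarith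
      · subst hq'
        have := hkey p hp'
        have e1 : w - p.2 = -(p.2 - w) := by abel
        have e2 : z - p.1 = -(p.1 - z) := by abel
        simp only [e1, e2, inner_neg_neg]
        linarith
      · exact hmono p hp' q hq'
    have hST := hmax _ hmonoS (Set.subset_insert _ _)
    have hzwT : (z, w) ∈ T := hST ▸ Set.mem_insert _ _
    have := hkey (z, w) hzwT
    simp only [sub_self, inner_zero_left, inner_zero_right] at this
    linarith
  -- Now optimize over t
  by_contra hcon
  push_neg at hcon
  have hs1 := Real.sqrt_nonneg ε₁
  have hs2 := Real.sqrt_nonneg ε₂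
  have hq1 := Real.sq_sqrt hε₁
  have hq2 := Real.sq_sqrt hε₂
  have hab : 0 ≤ Real.sqrt ε₁ * Real.sqrt ε₂ := mul_nonneg hs1 hs2
  have hA : ρ + ε₁ + ε₂ < -(2 * (Real.sqrt ε₁ * Real.sqrt ε₂)) := by nlinarith
  have hρneg : ρ < 0 := by nlinarith
  set τ : ℝ := (ε₂ - ε₁ - ρ) / (-2 * ρ) with hτ
  have hden : (0:ℝ) < -2 * ρ := by linarith
  have hτ0 : 0 ≤ τ := div_nonneg (by nlinarith) hden.le
  have hτ1 : τ ≤ 1 := by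
    rw [hτ, div_le_one hden]; nlinarith
  have hval : τ * ε₁ + (1 - τ) * ε₂ + τ * (1 - τ) * ρ
      = ((ρ + ε₁ + ε₂) ^ 2 - 4 * (ε₁ * ε₂)) / (4 * ρ) := by
    have hρne : ρ ≠ 0 := ne_of_lt hρneg
    rw [hτ]; field_simp; ring
  have hk := key τ hτ0 hτ1
  rw [hval] at hk
  have hρ4 : (4 * ρ) ≤ 0 := by linarith
  have hN : (ρ + ε₁ + ε₂) ^ 2 - 4 * (ε₁ * ε₂) ≤ 0 := by
    have h := mul_nonpos_of_nonneg_of_nonpos hk hρ4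
    rwa [div_mul_cancel₀ _ (by linarith : (4:ℝ) * ρ ≠ 0)] at h
  have h4 : (2 * (Real.sqrt ε₁ * Real.sqrt ε₂)) ^ 2 = 4 * (ε₁ * ε₂) := by
    linear_combination (4 * Real.sqrt ε₂ ^ 2) * hq1 + 4 * ε₁ * hq2
  nlinarith [hN, hA, hab, h4]
end

section
/- If A and B are maximal monotone operators on a real Hilbert space H, then the extended sum (A +ₑ B)(x) := ⋂_{ε>0} closure(A^ε x + B^ε x) is a monotone operator whose graph contains the graph of the usual sum A + B. -/
open RealInnerProductSpace

/-- The ε-enlargement of an operator (given by its graph) evaluated at x. -/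
def enlargement {H : Type*} [NormedAddCommGroup H] [InnerProductSpace ℝ H]
    (T : Set (H × H)) (ε : ℝ) (x : H) : Set H :=
  {u : H | ∀ r ∈ T, ⟪r.2 - u, r.1 - x⟫ ≥ -ε}

/-- The extended sum of two operators, as a graph. -/
def extendedSum {H : Type*} [NormedAddCommGroup H] [InnerProductSpace ℝ H]
    (A B : Set (H × H)) : Set (H × H) :=
  {p : H × H | ∀ ε : ℝ, 0 < ε →
    p.2 ∈ closure {w : H | ∃ u ∈ enlargement A ε p.1, ∃ v ∈ enlargement B ε p.1, w = u + v}}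

/-- Key lemma: enlargements of a maximal monotone operator are jointly
almost-monotone. -/
lemma enl_almost_mono {H : Type*} [NormedAddCommGroup H] [InnerProductSpace ℝ H]
    (A : Set (H × H))
    (hAmono : ∀ p ∈ A, ∀ q ∈ A, 0 ≤ ⟪q.2 - p.2, q.1 - p.1⟫)
    (hAmax : ∀ S : Set (H × H),
      (∀ p ∈ S, ∀ q ∈ S, 0 ≤ ⟪q.2 - p.2, q.1 - p.1⟫) → A ⊆ S → S = A)
    {ε δ : ℝ} {x y u v : H}
    (hu : u ∈ enlargement A ε x) (hv : v ∈ enlargement A δ y) :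
    ⟪u - v, x - y⟫ ≥ -2 * (ε + δ) := by
  by_contra hcon
  push_neg at hcon
  set c : ℝ := ⟪u - v, x - y⟫ with hc
  set z : H := (2:ℝ)⁻¹ • (x + y) with hz
  set w : H := (2:ℝ)⁻¹ • (u + v) with hw
  -- strict monotonicity of (z, w) against every point of A
  have key : ∀ r ∈ A, (0:ℝ) < ⟪r.2 - w, r.1 - z⟫ := by
    intro r hr
    have h1 := hu r hr
    have h2 := hv r hr
    have hid : ⟪r.2 - w, r.1 - z⟫
        = (1/2) * ⟪r.2 - u, r.1 - x⟫ + (1/2) * ⟪r.2 - v, r.1 - y⟫ - (1/4) * c := by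
      simp only [hw, hz, hc, inner_sub_left, inner_sub_right, inner_smul_left,
        inner_smul_right, inner_add_left, inner_add_right, RCLike.conj_to_real]
      ring
    rw [hid]
    nlinarith
  -- A ∪ {(z,w)} is monotone, hence equals A by maximality
  have hsub : A ⊆ A ∪ {(z, w)} := Set.subset_union_left
  have hmono : ∀ p ∈ A ∪ {(z, w)}, ∀ q ∈ A ∪ {(z, w)}, 0 ≤ ⟪q.2 - p.2, q.1 - p.1⟫ := by
    rintro p (hp | hp) q (hq | hq)
    · exact hAmono p hp q hq
    · simp only [Set.mem_singleton_iff] at hq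
      subst hq
      have hlt := key p hp
      have heq : ⟪p.2 - w, p.1 - z⟫ = ⟪w - p.2, z - p.1⟫ := by
        rw [← inner_neg_neg]; simp
      rw [heq] at hlt
      exact le_of_lt hlt
    · simp only [Set.mem_singleton_iff] at hp
      subst hp
      exact le_of_lt (key q hq)
    · simp only [Set.mem_singleton_iff] at hp hq
      subst hp; subst hq; simp
  have hEq := hAmax _ hmono hsub
  have hzw : (z, w) ∈ A := by rw [← hEq]; exact Set.mem_union_right _ rfl
  have hself := key (z, w) hzw
  simp at hself

/-- A linear inequality passes to the closure. -/
lemma closure_inner_ge {H : Type*} [NormedAddCommGroup H] [InnerProductSpace ℝ H]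
    {S : Set H} {d : H} {c : ℝ} (h : ∀ w ∈ S, c ≤ ⟪w, d⟫) {s : H}
    (hs : s ∈ closure S) : c ≤ ⟪s, d⟫ := by
  have hcl : IsClosed {w : H | c ≤ ⟪w, d⟫} :=
    isClosed_le continuous_const (continuous_id.inner continuous_const)
  exact hcl.closure_subset_iff.2 h hs

/-- the extended sum of two maximal monotone operators is a
monotone operator whose graph contains the graph of the usual sum. -/
theorem stmt_2 {H : Type*} [NormedAddCommGroup H] [InnerProductSpace ℝ H] [CompleteSpace H]
    (A B : Set (H × H))
    (hAmono : ∀ p ∈ A, ∀ q ∈ A, 0 ≤ ⟪q.2 - p.2, q.1 - p.1⟫)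
    (hAmax : ∀ S : Set (H × H),
      (∀ p ∈ S, ∀ q ∈ S, 0 ≤ ⟪q.2 - p.2, q.1 - p.1⟫) → A ⊆ S → S = A)
    (hBmono : ∀ p ∈ B, ∀ q ∈ B, 0 ≤ ⟪q.2 - p.2, q.1 - p.1⟫)
    (hBmax : ∀ S : Set (H × H),
      (∀ p ∈ S, ∀ q ∈ S, 0 ≤ ⟪q.2 - p.2, q.1 - p.1⟫) → B ⊆ S → S = B) :
    (∀ p ∈ extendedSum A B, ∀ q ∈ extendedSum A B, 0 ≤ ⟪q.2 - p.2, q.1 - p.1⟫) ∧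
    (∀ x u v : H, (x, u) ∈ A → (x, v) ∈ B → (x, u + v) ∈ extendedSum A B) := by
  constructor
  · rintro ⟨x, p2⟩ hp ⟨y, q2⟩ hq
    simp only at *
    -- for every ε > 0, ⟪q2 - p2, y - x⟫ ≥ -8ε
    have hstep : ∀ ε : ℝ, 0 < ε → -8 * ε ≤ ⟪q2 - p2, y - x⟫ := by
      intro ε hε
      have hp2 := hp ε hε
      have hq2 := hq ε hε
      simp only at hp2 hq2
      -- for w ∈ S_x, w' ∈ S_y : ⟪w', y - x⟫ ≥ ⟪w, y - x⟫ - 8ε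
      have hpair : ∀ w ∈ {w : H | ∃ u ∈ enlargement A ε x, ∃ v ∈ enlargement B ε x, w = u + v},
          ∀ w' ∈ {w : H | ∃ u ∈ enlargement A ε y, ∃ v ∈ enlargement B ε y, w = u + v},
          ⟪w, y - x⟫ - 8 * ε ≤ ⟪w', y - x⟫ := by
        rintro w ⟨u, hu, v, hv, rfl⟩ w' ⟨u', hu', v', hv', rfl⟩
        have h1 := enl_almost_mono A hAmono hAmax hu' hu
        have h2 := enl_almost_mono B hBmono hBmax hv' hv
        have e1 : ⟪u' - u, y - x⟫ = ⟪u' + v', y - x⟫ - ⟪v', y - x⟫ - ⟪u, y - x⟫ := by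
          simp [inner_sub_left, inner_add_left]
        have e2 : ⟪v' - v, y - x⟫ = ⟪v', y - x⟫ - ⟪v, y - x⟫ := by
          simp [inner_sub_left]
        have e3 : ⟪u + v, y - x⟫ = ⟪u, y - x⟫ + ⟪v, y - x⟫ := inner_add_left _ _ _
        rw [e1] at h1
        rw [e2] at h2
        linarith
      -- transfer to q2 via closure, for each fixed w
      have hq2' : ∀ w ∈ {w : H | ∃ u ∈ enlargement A ε x, ∃ v ∈ enlargement B ε x, w = u + v},
          ⟪w, y - x⟫ - 8 * ε ≤ ⟪q2, y - x⟫ := by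
        intro w hw
        exact closure_inner_ge (hpair w hw) hq2
      -- transfer to p2 via closure
      have hp2' : ⟪p2, y - x⟫ ≤ ⟪q2, y - x⟫ + 8 * ε := by
        have : ∀ w ∈ {w : H | ∃ u ∈ enlargement A ε x, ∃ v ∈ enlargement B ε x, w = u + v},
            -(⟪q2, y - x⟫) - 8 * ε ≤ ⟪w, -(y - x)⟫ := by
          intro w hw
          have := hq2' w hw
          rw [inner_neg_right]
          linarith
        have h := closure_inner_ge this hp2
        rw [inner_neg_right] at h
        linarith
      have : ⟪q2 - p2, y - x⟫ = ⟪q2, y - x⟫ - ⟪p2, y - x⟫ := by simp [inner_sub_left]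
      rw [this]
      linarith
    by_contra hneg
    push_neg at hneg
    have := hstep (-(⟪q2 - p2, y - x⟫) / 16) (by linarith)
    linarith
  · intro x u v hxu hxv
    intro ε hε
    simp only
    apply subset_closure
    refine ⟨u, ?_, v, ?_, rfl⟩
    · intro r hr
      have := hAmono (x, u) hxu r hr
      simp only at this
      linarith
    · intro r hr
      have := hBmono (x, v) hxv r hr
      simp only at this
      linarith
end

section
/- For every ε > 0 and every x in the effective domain of a proper convex lower semicontinuous function f : H → ℝ ∪ {+∞} on a real Hilbert space, the ε-subdifferential ∂_ε f(x) is nonempty. -/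
open RealInnerProductSpace

/-- for ε > 0 and x in the effective domain of a proper convex
lsc function f : H → ℝ ∪ {+∞} (modelled as EReal-valued, never ⊥), the
ε-subdifferential ∂_ε f(x) is nonempty. -/
theorem stmt_4 {H : Type*} [NormedAddCommGroup H] [InnerProductSpace ℝ H] [CompleteSpace H]
    (f : H → EReal)
    (hproper : ∃ x, f x ≠ ⊤) (hbot : ∀ x, f x ≠ ⊥)
    (hconv : ∀ x y : H, ∀ a b : ℝ, 0 ≤ a → 0 ≤ b → a + b = 1 →
      f (a • x + b • y) ≤ (a : EReal) * f x + (b : EReal) * f y)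
    (hlsc : LowerSemicontinuous f)
    (ε : ℝ) (hε : 0 < ε) (x : H) (hx : f x ≠ ⊤) :
    ∃ u : H, ∀ y : H, f x + ((⟪u, y - x⟫ : ℝ) : EReal) ≤ f y + (ε : EReal) := by
  classical
  obtain ⟨r, hr⟩ : ∃ r : ℝ, f x = (r : EReal) := ⟨(f x).toReal, (EReal.coe_toReal hx (hbot x)).symm⟩
  set E : Set (H × ℝ) := {p | f p.1 ≤ (p.2 : EReal)} with hE
  have hEconv : Convex ℝ E := by
    rintro ⟨y1, t1⟩ h1 ⟨y2, t2⟩ h2 a b ha hb hab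
    simp only [hE, Set.mem_setOf_eq] at h1 h2 ⊢
    obtain ⟨s1, hs1⟩ : ∃ s : ℝ, f y1 = (s : EReal) :=
      ⟨(f y1).toReal, (EReal.coe_toReal (h1.trans_lt (EReal.coe_lt_top t1)).ne (hbot y1)).symm⟩
    obtain ⟨s2, hs2⟩ : ∃ s : ℝ, f y2 = (s : EReal) :=
      ⟨(f y2).toReal, (EReal.coe_toReal (h2.trans_lt (EReal.coe_lt_top t2)).ne (hbot y2)).symm⟩
    have h1' : s1 ≤ t1 := by rwa [hs1, EReal.coe_le_coe_iff] at h1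
    have h2' : s2 ≤ t2 := by rwa [hs2, EReal.coe_le_coe_iff] at h2
    have := hconv y1 y2 a b ha hb hab
    rw [hs1, hs2, ← EReal.coe_mul, ← EReal.coe_mul, ← EReal.coe_add] at this
    refine le_trans this ?_
    show ((a * s1 + b * s2 : ℝ) : EReal) ≤ (((a • (y1, t1) + b • (y2, t2) : H × ℝ).2 : ℝ) : EReal)
    have : (a • (y1, t1) + b • (y2, t2) : H × ℝ).2 = a * t1 + b * t2 := rfl
    rw [this, EReal.coe_le_coe_iff]
    nlinarith
  have hEclosed : IsClosed E := by
    rw [← isOpen_compl_iff, isOpen_iff_mem_nhds]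
    rintro ⟨y, t⟩ hp
    simp only [Set.mem_compl_iff, hE, Set.mem_setOf_eq, not_le] at hp
    obtain ⟨c, hc1, hc2⟩ := EReal.exists_between_coe_real hp
    have h1 : ∀ᶠ z in nhds y, (c : EReal) < f z := hlsc y _ hc2
    have h2 : ∀ᶠ s in nhds t, s < c := eventually_lt_nhds (by exact_mod_cast hc1)
    filter_upwards [h1.prod_nhds h2] with p hp'
    simp only [Set.mem_compl_iff, hE, Set.mem_setOf_eq, not_le]
    exact lt_trans (by exact_mod_cast hp'.2) hp'.1
  have hxE : ((x, r - ε) : H × ℝ) ∉ E := by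
    simp only [hE, Set.mem_setOf_eq, hr, not_le, EReal.coe_lt_coe_iff]
    linarith
  obtain ⟨φ, c, hc1, hc2⟩ := geometric_hahn_banach_point_closed hEconv hEclosed hxE
  set a : ℝ := φ (0, 1) with ha
  have hsplit : ∀ (y : H) (t : ℝ), φ (y, t) = φ (y, 0) + t * a := by
    intro y t
    have : ((y, t) : H × ℝ) = (y, 0) + t • (0, 1) := by
      simp [Prod.ext_iff]
    rw [this, map_add, map_smul, smul_eq_mul, ha]
  have hmemE : ∀ (y : H) (t : ℝ), f y ≤ (t : EReal) → c < φ (y, 0) + t * a := by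
    intro y t ht
    have := hc2 (y, t) ht
    rwa [hsplit] at this
  have hxr : c < φ (x, 0) + r * a := hmemE x r (le_of_eq hr)
  have hxc : φ (x, 0) + (r - ε) * a < c := by
    have := hc1
    rwa [hsplit] at this
  have hapos : 0 < a := by nlinarith
  set ψ : H →L[ℝ] ℝ := (-(a⁻¹)) • (φ.comp (ContinuousLinearMap.inl ℝ H ℝ)) with hψ
  have hψval : ∀ y : H, ψ y = -(φ (y, 0)) / a := by
    intro y
    simp only [hψ, ContinuousLinearMap.smul_apply, ContinuousLinearMap.coe_comp',
      Function.comp_apply, ContinuousLinearMap.inl_apply, smul_eq_mul]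
    field_simp
  refine ⟨(InnerProductSpace.toDual ℝ H).symm ψ, fun y => ?_⟩
  have hinner : ∀ z : H, (⟪(InnerProductSpace.toDual ℝ H).symm ψ, z⟫ : ℝ) = ψ z := fun z =>
    InnerProductSpace.toDual_symm_apply
  rw [inner_sub_right, hinner, hinner]
  by_cases hy : f y = ⊤
  · rw [hy]
    exact le_top.trans_eq (by rw [EReal.top_add_of_ne_bot (by simp)])
  obtain ⟨s, hs⟩ : ∃ s : ℝ, f y = (s : EReal) := ⟨(f y).toReal, (EReal.coe_toReal hy (hbot y)).symm⟩
  have hys : c < φ (y, 0) + s * a := hmemE y s (le_of_eq hs)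
  rw [hr, hs, ← EReal.coe_add, ← EReal.coe_add, EReal.coe_le_coe_iff, hψval, hψval]
  have key : φ (x, 0) + (r - ε) * a < φ (y, 0) + s * a := lt_trans hxc hys
  have h2 : -(φ (y, 0)) / a - -(φ (x, 0)) / a ≤ s + ε - r := by
    rw [show -(φ (y, 0)) / a - -(φ (x, 0)) / a = (φ (x, 0) - φ (y, 0)) / a from by ring,
      div_le_iff₀ hapos]
    nlinarith
  linarith
end

section
/- (Opial–Passty lemma) Let (λₙ) be a sequence of positive reals with Σλₙ = ∞, (xₙ) a sequence in a Hilbert space H, and let x̄ₙ = (1/σₙ) Σ_{k=1}^n λₖ xₖ where σₙ = Σ_{k=1}^n λₖ. Let S ⊆ H be a nonempty closed set. If (i) every weak sequential cluster point of (x̄ₙ) belongs to S, and (ii) lim ‖xₙ - x‖ exists for every x ∈ S, then (x̄ₙ) converges weakly to a point of S. -/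
open Filter Finset RealInnerProductSpace

lemma cesaro_range (g b : ℕ → ℝ) {L : ℝ} (hgpos : ∀ i, 0 < g i)
    (hdiv' : Tendsto (fun n => ∑ i ∈ range n, g i) atTop atTop)
    (hb' : Tendsto b atTop (nhds L)) :
    Tendsto (fun n => (∑ i ∈ range n, g i)⁻¹ * ∑ i ∈ range n, g i * b i)
      atTop (nhds L) := by
  have hsmall : (fun i => g i * (b i - L)) =o[atTop] g := by
    rw [Asymptotics.isLittleO_iff]
    intro ε hε
    filter_upwards [hb'.eventually (Metric.closedBall_mem_nhds L hε)] with i hi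
    have habs : |b i - L| ≤ ε := by
      rw [Real.dist_eq] at hi
      exact hi
    have h1 : ‖g i * (b i - L)‖ = g i * |b i - L| := by
      rw [Real.norm_eq_abs, abs_mul, abs_of_pos (hgpos i)]
    rw [h1, Real.norm_eq_abs, abs_of_pos (hgpos i)]
    calc g i * |b i - L| ≤ g i * ε := mul_le_mul_of_nonneg_left habs (hgpos i).le
      _ = ε * g i := mul_comm _ _
  have hsum : (fun n => ∑ i ∈ range n, g i * (b i - L)) =o[atTop]
      (fun n => ∑ i ∈ range n, g i) :=
    hsmall.sum_range (fun i => (hgpos i).le) hdiv'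
  have hdivtend : Tendsto (fun n => (∑ i ∈ range n, g i * (b i - L)) / ∑ i ∈ range n, g i)
      atTop (nhds 0) := hsum.tendsto_div_nhds_zero
  have key : Tendsto (fun n => L + (∑ i ∈ range n, g i * (b i - L)) / ∑ i ∈ range n, g i)
      atTop (nhds (L + 0)) := tendsto_const_nhds.add hdivtend
  rw [add_zero] at key
  apply key.congr'
  filter_upwards [hdiv'.eventually_gt_atTop 0] with n hn
  have hne : (∑ i ∈ range n, g i) ≠ 0 := hn.ne'
  have hs : ∑ i ∈ range n, g i * (b i - L)
      = (∑ i ∈ range n, g i * b i) - (∑ i ∈ range n, g i) * L := by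
    rw [Finset.sum_mul, ← Finset.sum_sub_distrib]
    congr 1; ext i; ring
  rw [hs]
  field_simp
  ring

/-- Weighted Cesàro: if `a → L` and the positive weights have divergent partial sums,
then the weighted averages tend to `L`. -/
lemma weighted_cesaro (lam : ℕ → ℝ) (hlam : ∀ n, 0 < lam n)
    (hdiv : Tendsto (fun n => ∑ k ∈ Finset.Icc 1 n, lam k) atTop atTop)
    (a : ℕ → ℝ) {L : ℝ} (ha : Tendsto a atTop (nhds L)) :
    Tendsto (fun n => (∑ k ∈ Finset.Icc 1 n, lam k)⁻¹ * ∑ k ∈ Finset.Icc 1 n, lam k * a k)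
      atTop (nhds L) := by
  have hIcc : ∀ (f : ℕ → ℝ) (n : ℕ), ∑ k ∈ Finset.Icc 1 n, f k = ∑ i ∈ range n, f (1 + i) := by
    intro f n
    rw [← Finset.Ico_add_one_right_eq_Icc, Finset.sum_Ico_eq_sum_range]
    simp
  have hdiv' : Tendsto (fun n => ∑ i ∈ range n, lam (1 + i)) atTop atTop := by
    simpa only [hIcc] using hdiv
  have hb' : Tendsto (fun i => a (1 + i)) atTop (nhds L) :=
by
    have h := ha.comp (tendsto_add_atTop_nat 1)
    simpa [Function.comp_def, Nat.add_comm] using h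
  have := cesaro_range (fun i => lam (1 + i)) (fun i => a (1 + i)) (fun i => hlam _) hdiv' hb'
  apply this.congr
  intro n
  rw [hIcc lam n, hIcc (fun k => lam k * a k) n]

lemma weak_seq_compact {H : Type*} [NormedAddCommGroup H] [InnerProductSpace ℝ H]
    [CompleteSpace H] (y : ℕ → H) (C : ℝ) (hC : ∀ n, ‖y n‖ ≤ C) :
    ∃ z : H, ∃ φ : ℕ → ℕ, StrictMono φ ∧
      ∀ w : H, Tendsto (fun n => ⟪y (φ n), w⟫) atTop (nhds ⟪z, w⟫) := by
  have hC0 : 0 ≤ C := le_trans (norm_nonneg (y 0)) (hC 0)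
  -- diagonal extraction via compactness of a product of intervals
  have hgmem : ∀ n, (fun m => ⟪y n, y m⟫) ∈
      Set.pi Set.univ (fun _ : ℕ => Set.Icc (-(C*C)) (C*C)) := by
    intro n m _
    have h := abs_real_inner_le_norm (y n) (y m)
    have h2 : |⟪y n, y m⟫| ≤ C * C :=
      h.trans (mul_le_mul (hC n) (hC m) (norm_nonneg _) hC0)
    exact ⟨(abs_le.1 h2).1, (abs_le.1 h2).2⟩
  have hcomp : IsCompact (Set.pi Set.univ (fun _ : ℕ => Set.Icc (-(C*C)) (C*C))) :=
    isCompact_univ_pi fun _ => isCompact_Icc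
  obtain ⟨b, -, φ, hφ, hconv⟩ := hcomp.tendsto_subseq hgmem
  have hpt : ∀ m, Tendsto (fun n => ⟪y (φ n), y m⟫) atTop (nhds (b m)) := by
    intro m
    exact (tendsto_pi_nhds.1 hconv) m
  -- convergence on the span
  set P : Submodule ℝ H := Submodule.span ℝ (Set.range y) with hP
  have conv_span : ∀ w ∈ P, ∃ L : ℝ, Tendsto (fun n => ⟪y (φ n), w⟫) atTop (nhds L) := by
    intro w hw
    induction hw using Submodule.span_induction with
    | mem u hu =>
        obtain ⟨m, rfl⟩ := hu
        exact ⟨b m, hpt m⟩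
    | zero => exact ⟨0, by simpa [inner_zero_right] using tendsto_const_nhds⟩
    | add u v _ _ hu hv =>
        obtain ⟨Lu, hLu⟩ := hu
        obtain ⟨Lv, hLv⟩ := hv
        exact ⟨Lu + Lv, by simpa [inner_add_right] using hLu.add hLv⟩
    | smul r u _ hu =>
        obtain ⟨Lu, hLu⟩ := hu
        exact ⟨r * Lu, by simpa [real_inner_smul_right] using hLu.const_mul r⟩
  -- convergence on the closure of the span
  have conv_closure : ∀ w ∈ closure (P : Set H), ∃ L : ℝ,
      Tendsto (fun n => ⟪y (φ n), w⟫) atTop (nhds L) := by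
    intro w hw
    have hcauchy : CauchySeq (fun n => ⟪y (φ n), w⟫) := by
      rw [Metric.cauchySeq_iff]
      intro ε hε
      have hδ : 0 < ε / (3 * (C + 1)) := by positivity
      obtain ⟨w', hw'P, hww'⟩ := Metric.mem_closure_iff.1 hw _ hδ
      obtain ⟨L, hL⟩ := conv_span w' hw'P
      have hLc := hL.cauchySeq
      rw [Metric.cauchySeq_iff] at hLc
      obtain ⟨N, hN⟩ := hLc (ε / 3) (by positivity)
      refine ⟨N, fun n hn m hm => ?_⟩
      have hterm : ∀ k, |⟪y (φ k), w⟫ - ⟪y (φ k), w'⟫| ≤ ε / 3 := by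
        intro k
        have h1 : ⟪y (φ k), w⟫ - ⟪y (φ k), w'⟫ = ⟪y (φ k), w - w'⟫ := by
          rw [inner_sub_right]
        rw [h1]
        have h2 := abs_real_inner_le_norm (y (φ k)) (w - w')
        have h3 : ‖y (φ k)‖ * ‖w - w'‖ ≤ C * (ε / (3 * (C + 1))) := by
          apply mul_le_mul (hC _) _ (norm_nonneg _) hC0
          rw [← dist_eq_norm]
          exact hww'.le
        have h4 : C * (ε / (3 * (C + 1))) ≤ ε / 3 := by
          have hc1 : (0:ℝ) < C + 1 := by linarith
          have he : (C + 1) * (ε / (3 * (C + 1))) = ε / 3 := by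
            field_simp
          calc C * (ε / (3 * (C + 1))) ≤ (C + 1) * (ε / (3 * (C + 1))) :=
                mul_le_mul_of_nonneg_right (by linarith) hδ.le
            _ = ε / 3 := he
        exact h2.trans (h3.trans h4)
      have key : dist ⟪y (φ n), w⟫ ⟪y (φ m), w⟫ ≤
          |⟪y (φ n), w⟫ - ⟪y (φ n), w'⟫| + dist ⟪y (φ n), w'⟫ ⟪y (φ m), w'⟫
            + |⟪y (φ m), w'⟫ - ⟪y (φ m), w⟫| := by
        rw [Real.dist_eq, Real.dist_eq]
        have : ⟪y (φ n), w⟫ - ⟪y (φ m), w⟫ =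
            (⟪y (φ n), w⟫ - ⟪y (φ n), w'⟫) + (⟪y (φ n), w'⟫ - ⟪y (φ m), w'⟫)
              + (⟪y (φ m), w'⟫ - ⟪y (φ m), w⟫) := by ring
        rw [this]
        exact (abs_add_le _ _).trans (by gcongr; exact abs_add_le _ _)
      have habs : |⟪y (φ m), w'⟫ - ⟪y (φ m), w⟫| = |⟪y (φ m), w⟫ - ⟪y (φ m), w'⟫| :=
        abs_sub_comm _ _
      calc dist ⟪y (φ n), w⟫ ⟪y (φ m), w⟫ ≤ _ := key
        _ < ε / 3 + ε / 3 + ε / 3 := by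
            have h7 : |⟪y (φ m), w'⟫ - ⟪y (φ m), w⟫| ≤ ε / 3 := by
              rw [habs]; exact hterm m
            have h8 := hterm n
            have h9 := hN n hn m hm
            linarith
        _ = ε := by ring
    exact cauchySeq_tendsto_of_complete hcauchy
  -- convergence everywhere, via orthogonal projection
  set K : Submodule ℝ H := P.topologicalClosure with hK
  haveI : CompleteSpace K := P.isClosed_topologicalClosure.completeSpace_coe
  have hall : ∀ w : H, ∃ L : ℝ, Tendsto (fun n => ⟪y (φ n), w⟫) atTop (nhds L) := by
    intro w
    set v : H := (K.orthogonalProjectionOnto w : H) with hv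
    have hvmem : v ∈ closure (P : Set H) := by
      have h := (K.orthogonalProjectionOnto w).2
      rw [← Submodule.topologicalClosure_coe]
      exact h
    obtain ⟨L, hL⟩ := conv_closure v hvmem
    refine ⟨L, hL.congr fun n => ?_⟩
    have hyn : y (φ n) ∈ K := Submodule.le_topologicalClosure P (Submodule.subset_span ⟨φ n, rfl⟩)
    have horth : w - v ∈ Kᗮ := Submodule.sub_starProjection_mem_orthogonal (K := K) w
    have h0 : ⟪y (φ n), w - v⟫ = 0 :=
      (Submodule.mem_orthogonal K (w - v)).1 horth (y (φ n)) hyn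
    rw [inner_sub_right] at h0
    linarith
  -- build the weak limit via Riesz representation
  choose f hf using hall
  have hadd : ∀ u v : H, f (u + v) = f u + f v := by
    intro u v
    refine tendsto_nhds_unique ?_ ((hf u).add (hf v))
    exact (hf (u + v)).congr fun n => by rw [inner_add_right]
  have hsmul : ∀ (r : ℝ) (u : H), f (r • u) = r * f u := by
    intro r u
    refine tendsto_nhds_unique ?_ ((hf u).const_mul r)
    exact (hf (r • u)).congr fun n => by rw [real_inner_smul_right]
  have hbound : ∀ w : H, ‖f w‖ ≤ C * ‖w‖ := by
    intro w
    rw [Real.norm_eq_abs]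
    refine le_of_tendsto (hf w).abs (Eventually.of_forall fun n => ?_)
    exact (abs_real_inner_le_norm _ _).trans
      (mul_le_mul_of_nonneg_right (hC _) (norm_nonneg _))
  let F : H →ₗ[ℝ] ℝ :=
    { toFun := f
      map_add' := hadd
      map_smul' := hsmul }
  let F' : H →L[ℝ] ℝ := F.mkContinuous C hbound
  refine ⟨(InnerProductSpace.toDual ℝ H).symm F', φ, hφ, fun w => ?_⟩
  have : ⟪((InnerProductSpace.toDual ℝ H).symm F' : H), w⟫ = F' w :=
    InnerProductSpace.toDual_symm_apply
  rw [this]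
  exact hf w

lemma opial_uniq {H : Type*} [NormedAddCommGroup H] [InnerProductSpace ℝ H]
    (lam : ℕ → ℝ) (hlam : ∀ n, 0 < lam n)
    (hdiv : Tendsto (fun n => ∑ k ∈ Finset.Icc 1 n, lam k) atTop atTop)
    (x : ℕ → H) (xbar : ℕ → H)
    (hxbar : ∀ n, xbar n =
      (∑ k ∈ Finset.Icc 1 n, lam k)⁻¹ • ∑ k ∈ Finset.Icc 1 n, lam k • x k)
    {p q : H}
    (hp2 : ∃ l : ℝ, Tendsto (fun n => ‖x n - p‖) atTop (nhds l))
    (hq2 : ∃ l : ℝ, Tendsto (fun n => ‖x n - q‖) atTop (nhds l))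
    {φ ψ : ℕ → ℕ} (hφ : StrictMono φ) (hψ : StrictMono ψ)
    (hpw : ∀ w : H, Tendsto (fun n => ⟪xbar (φ n), w⟫) atTop (nhds ⟪p, w⟫))
    (hqw : ∀ w : H, Tendsto (fun n => ⟪xbar (ψ n), w⟫) atTop (nhds ⟪q, w⟫)) :
    p = q := by
  obtain ⟨Lp, hLp⟩ := hp2
  obtain ⟨Lq, hLq⟩ := hq2
  set c : ℝ := (Lp ^ 2 - Lq ^ 2 - ‖p‖ ^ 2 + ‖q‖ ^ 2) / 2 with hc
  have hdiff : Tendsto (fun n => ⟪x n, q - p⟫) atTop (nhds c) := by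
    have h1 : Tendsto (fun n => ‖x n - p‖ ^ 2 - ‖x n - q‖ ^ 2) atTop
        (nhds (Lp ^ 2 - Lq ^ 2)) := (hLp.pow 2).sub (hLq.pow 2)
    have h2 : Tendsto
        (fun n => ((‖x n - p‖ ^ 2 - ‖x n - q‖ ^ 2) - ‖p‖ ^ 2 + ‖q‖ ^ 2) / 2) atTop
        (nhds c) := by
      rw [hc]
      exact (((h1.sub tendsto_const_nhds).add tendsto_const_nhds).div_const 2)
    apply h2.congr
    intro n
    have e1 := norm_sub_sq_real (x n) p
    have e2 := norm_sub_sq_real (x n) q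
    have e3 : ⟪x n, q - p⟫ = ⟪x n, q⟫ - ⟪x n, p⟫ := inner_sub_right _ _ _
    linarith
  have havg : Tendsto (fun n => ⟪xbar n, q - p⟫) atTop (nhds c) := by
    apply (weighted_cesaro lam hlam hdiv _ hdiff).congr
    intro n
    rw [hxbar n, real_inner_smul_left, sum_inner]
    congr 1
    apply Finset.sum_congr rfl
    intro k _
    rw [real_inner_smul_left]
  have hpc : ⟪p, q - p⟫ = c :=
    tendsto_nhds_unique (hpw (q - p)) (havg.comp hφ.tendsto_atTop)
  have hqc : ⟪q, q - p⟫ = c :=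
    tendsto_nhds_unique (hqw (q - p)) (havg.comp hψ.tendsto_atTop)
  have hz : ⟪q - p, q - p⟫ = (0 : ℝ) := by
    rw [inner_sub_left, hpc, hqc, sub_self]
  have := inner_self_eq_zero.1 hz
  rw [sub_eq_zero] at this
  exact this.symm

/-- Opial–Passty lemma. Weak convergence is expressed by
convergence of the inner products against every vector, and weak sequential
cluster points as weak limits of subsequences. -/
theorem stmt_5 {H : Type*} [NormedAddCommGroup H] [InnerProductSpace ℝ H] [CompleteSpace H]
    (lam : ℕ → ℝ) (hlam : ∀ n, 0 < lam n)
    (hdiv : Filter.Tendsto (fun n => ∑ k ∈ Finset.Icc 1 n, lam k) Filter.atTop Filter.atTop)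
    (x : ℕ → H) (xbar : ℕ → H)
    (hxbar : ∀ n, xbar n =
      (∑ k ∈ Finset.Icc 1 n, lam k)⁻¹ • ∑ k ∈ Finset.Icc 1 n, lam k • x k)
    (S : Set H) (hS : S.Nonempty) (hSclosed : IsClosed S)
    (h1 : ∀ z : H, ∀ φ : ℕ → ℕ, StrictMono φ →
      (∀ w : H, Filter.Tendsto (fun n => ⟪xbar (φ n), w⟫) Filter.atTop (nhds ⟪z, w⟫)) →
      z ∈ S)
    (h2 : ∀ p ∈ S, ∃ l : ℝ, Filter.Tendsto (fun n => ‖x n - p‖) Filter.atTop (nhds l)) :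
    ∃ z ∈ S, ∀ w : H,
      Filter.Tendsto (fun n => ⟪xbar n, w⟫) Filter.atTop (nhds ⟪z, w⟫) := by
  obtain ⟨p, hpS⟩ := hS
  obtain ⟨l, hl⟩ := h2 p hpS
  obtain ⟨C, hC⟩ : ∃ C : ℝ, ∀ n, ‖x n - p‖ ≤ C := by
    obtain ⟨C, hC⟩ := hl.bddAbove_range
    exact ⟨C, fun n => hC ⟨n, rfl⟩⟩
  have hC0 : 0 ≤ C := le_trans (norm_nonneg _) (hC 0)
  -- boundedness of the averages
  have hbd : ∀ n, ‖xbar n‖ ≤ C + ‖p‖ := by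
    intro n
    rcases Nat.eq_zero_or_pos n with rfl | hn
    · have : xbar 0 = 0 := by
        rw [hxbar 0]
        have he : Finset.Icc 1 0 = (∅ : Finset ℕ) := by
          apply Finset.Icc_eq_empty
          norm_num
        rw [he]
        simp
      rw [this, norm_zero]
      positivity
    · set σ : ℝ := ∑ k ∈ Finset.Icc 1 n, lam k with hσ
      have hσpos : 0 < σ := by
        apply Finset.sum_pos (fun k _ => hlam k)
        exact Finset.nonempty_Icc.2 hn
      have hkey : xbar n - p = σ⁻¹ • ∑ k ∈ Finset.Icc 1 n, lam k • (x k - p) := by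
        have hs : ∑ k ∈ Finset.Icc 1 n, lam k • (x k - p)
            = (∑ k ∈ Finset.Icc 1 n, lam k • x k) - σ • p := by
          rw [hσ, Finset.sum_smul, ← Finset.sum_sub_distrib]
          apply Finset.sum_congr rfl
          intro k _
          rw [smul_sub]
        rw [hs, smul_sub, ← hxbar n, smul_smul, inv_mul_cancel₀ hσpos.ne', one_smul]
      have hnorm : ‖xbar n - p‖ ≤ C := by
        rw [hkey, norm_smul, Real.norm_eq_abs, abs_of_pos (inv_pos.2 hσpos)]
        have hsum : ‖∑ k ∈ Finset.Icc 1 n, lam k • (x k - p)‖ ≤ σ * C := by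
          calc ‖∑ k ∈ Finset.Icc 1 n, lam k • (x k - p)‖
              ≤ ∑ k ∈ Finset.Icc 1 n, ‖lam k • (x k - p)‖ := norm_sum_le _ _
            _ ≤ ∑ k ∈ Finset.Icc 1 n, lam k * C := by
                apply Finset.sum_le_sum
                intro k _
                rw [norm_smul, Real.norm_eq_abs, abs_of_pos (hlam k)]
                exact mul_le_mul_of_nonneg_left (hC k) (hlam k).le
            _ = σ * C := by rw [← Finset.sum_mul]
        calc σ⁻¹ * ‖∑ k ∈ Finset.Icc 1 n, lam k • (x k - p)‖
            ≤ σ⁻¹ * (σ * C) :=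
              mul_le_mul_of_nonneg_left hsum (inv_pos.2 hσpos).le
          _ = C := by field_simp
      calc ‖xbar n‖ = ‖xbar n - p + p‖ := by rw [sub_add_cancel]
        _ ≤ ‖xbar n - p‖ + ‖p‖ := norm_add_le _ _
        _ ≤ C + ‖p‖ := add_le_add_left hnorm _
  obtain ⟨z, φ, hφ, hweak⟩ := weak_seq_compact xbar (C + ‖p‖) hbd
  have hzS : z ∈ S := h1 z φ hφ hweak
  refine ⟨z, hzS, fun w => ?_⟩
  apply Filter.tendsto_of_subseq_tendsto
  intro ns hns
  obtain ⟨ψ, hψ, hnsψ⟩ := strictMono_subseq_of_tendsto_atTop hns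
  obtain ⟨z₂, θ, hθ, hweak₂⟩ :=
    weak_seq_compact (fun n => xbar (ns (ψ n))) (C + ‖p‖) (fun n => hbd _)
  have hsm : StrictMono (fun n => ns (ψ (θ n))) := hnsψ.comp hθ
  have hweak₂' : ∀ w : H,
      Tendsto (fun n => ⟪xbar (ns (ψ (θ n))), w⟫) atTop (nhds ⟪z₂, w⟫) :=
    fun w => hweak₂ w
  have hz₂S : z₂ ∈ S := h1 z₂ _ hsm hweak₂'
  have heq : z₂ = z :=
    opial_uniq lam hlam hdiv x xbar hxbar (h2 z₂ hz₂S) (h2 z hzS) hsm hφ hweak₂' hweak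
  exact ⟨fun n => ψ (θ n), heq ▸ hweak₂' w⟩
end

section
/- Let A, B be maximal monotone operators on a real Hilbert space H, let x ∈ H, and let (εₙ) be a sequence of positive reals decreasing to 0. If for each n there exist y₁ₙ ∈ A^{εₙ}x and y₂ₙ ∈ B^{εₙ}x with y₁ₙ + y₂ₙ → 0, and if (y₁ₙ) is bounded, then there exists y ∈ Ax ∩ (−Bx); in particular x ∈ (A+B)^{-1}(0). -/
open RealInnerProductSpace

/-- A cluster value of a real sequence eventually bounded above by `K + δ`
for every `δ > 0` is at most `K`. -/
lemma cluster_le_aux {a : ℕ → ℝ} {L K : ℝ}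
    (h : ClusterPt L (Filter.map a Filter.atTop))
    (hev : ∀ δ > 0, ∀ᶠ n in Filter.atTop, a n ≤ K + δ) : L ≤ K := by
  refine le_of_forall_pos_le_add fun δ hδ => ?_
  have hle : Filter.map a Filter.atTop ≤ Filter.principal (Set.Iic (K + δ)) := by
    rw [Filter.le_principal_iff, Filter.mem_map]
    exact hev δ hδ
  have : L ∈ closure (Set.Iic (K + δ)) :=
    mem_closure_iff_clusterPt.2 (h.mono hle)
  rwa [isClosed_Iic.closure_eq] at this

/-- if approximate decompositions of 0 through the enlargements
of A and B at x exist with a bounded A-part, then 0 belongs to the usual sum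
(Ax + Bx), i.e. x ∈ (A+B)⁻¹(0). -/
theorem stmt_7 {H : Type*} [NormedAddCommGroup H] [InnerProductSpace ℝ H] [CompleteSpace H]
    (A B : Set (H × H))
    (hAmono : ∀ p ∈ A, ∀ q ∈ A, 0 ≤ ⟪q.2 - p.2, q.1 - p.1⟫)
    (hAmax : ∀ S : Set (H × H),
      (∀ p ∈ S, ∀ q ∈ S, 0 ≤ ⟪q.2 - p.2, q.1 - p.1⟫) → A ⊆ S → S = A)
    (hBmono : ∀ p ∈ B, ∀ q ∈ B, 0 ≤ ⟪q.2 - p.2, q.1 - p.1⟫)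
    (hBmax : ∀ S : Set (H × H),
      (∀ p ∈ S, ∀ q ∈ S, 0 ≤ ⟪q.2 - p.2, q.1 - p.1⟫) → B ⊆ S → S = B)
    (x : H) (eps : ℕ → ℝ) (hpos : ∀ n, 0 < eps n) (hanti : Antitone eps)
    (heps0 : Filter.Tendsto eps Filter.atTop (nhds 0))
    (y₁ y₂ : ℕ → H)
    (hy₁ : ∀ n, ∀ r ∈ A, ⟪r.2 - y₁ n, r.1 - x⟫ ≥ -(eps n))
    (hy₂ : ∀ n, ∀ r ∈ B, ⟪r.2 - y₂ n, r.1 - x⟫ ≥ -(eps n))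
    (hconv : Filter.Tendsto (fun n => y₁ n + y₂ n) Filter.atTop (nhds 0))
    (hbdd : ∃ M : ℝ, ∀ n, ‖y₁ n‖ ≤ M) :
    ∃ y : H, (x, y) ∈ A ∧ (x, -y) ∈ B := by
  classical
  obtain ⟨M, hM⟩ := hbdd
  -- map the sequence into the weak dual
  set g : ℕ → WeakDual ℝ H :=
    fun n => StrongDual.toWeakDual (InnerProductSpace.toDual ℝ H (y₁ n)) with hg
  have hgball : ∀ n, g n ∈ WeakDual.toStrongDual ⁻¹' Metric.closedBall 0 M := by
    intro n
    simp only [Set.mem_preimage, Metric.mem_closedBall, dist_zero_right]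
    have := (InnerProductSpace.toDual ℝ H).norm_map (y₁ n)
    calc ‖WeakDual.toStrongDual (g n)‖ = ‖y₁ n‖ := this
      _ ≤ M := hM n
  have hcompact : IsCompact (WeakDual.toStrongDual ⁻¹' Metric.closedBall (0 : StrongDual ℝ H) M) :=
    WeakDual.isCompact_closedBall (𝕜 := ℝ) 0 M
  have hle : Filter.map g Filter.atTop ≤
      Filter.principal (WeakDual.toStrongDual ⁻¹' Metric.closedBall (0 : StrongDual ℝ H) M) := by
    rw [Filter.le_principal_iff, Filter.mem_map]
    exact Filter.Eventually.of_forall hgball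
  obtain ⟨φ, -, hφ⟩ := hcompact hle
  set y : H := (InnerProductSpace.toDual ℝ H).symm (WeakDual.toStrongDual φ) with hy
  -- key cluster-point fact for inner products
  have hcluster : ∀ c : H,
      ClusterPt (⟪y, c⟫ : ℝ) (Filter.map (fun n => (⟪y₁ n, c⟫ : ℝ)) Filter.atTop) := by
    intro c
    have hcont : ContinuousAt (fun ψ : WeakDual ℝ H => ψ c) φ :=
      (WeakDual.eval_continuous c).continuousAt
    have := hφ.map hcont (Filter.tendsto_map (f := fun ψ : WeakDual ℝ H => ψ c))
    rw [Filter.map_map] at this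
    have hφc : φ c = ⟪y, c⟫ := by
      have : (WeakDual.toStrongDual φ) c = ⟪y, c⟫ := by
        rw [hy]
        have := InnerProductSpace.toDual_apply_apply (𝕜 := ℝ) (E := H)
          (x := (InnerProductSpace.toDual ℝ H).symm (WeakDual.toStrongDual φ)) (y := c)
        rw [← this]
        simp
      exact this
    have hgc : (fun n => (g n) c) = fun n => (⟪y₁ n, c⟫ : ℝ) := by
      funext n
      exact InnerProductSpace.toDual_apply_apply
    simp only [Function.comp_def] at this
    rwa [hφc, hgc] at this
  refine ⟨y, ?_, ?_⟩
  · -- (x, y) ∈ A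
    have hkey : ∀ r ∈ A, (0 : ℝ) ≤ ⟪r.2 - y, r.1 - x⟫ := by
      intro r hr
      have hclu := hcluster (r.1 - x)
      have hev : ∀ δ > 0, ∀ᶠ n in Filter.atTop,
          (⟪y₁ n, r.1 - x⟫ : ℝ) ≤ ⟪r.2, r.1 - x⟫ + δ := by
        intro δ hδ
        have heps : ∀ᶠ n in Filter.atTop, eps n < δ :=
          heps0.eventually (eventually_lt_nhds hδ)
        filter_upwards [heps] with n hn
        have h1 := hy₁ n r hr
        rw [inner_sub_left] at h1
        linarith
      have := cluster_le_aux hclu hev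
      rw [inner_sub_left]
      linarith
    have hmono : ∀ p ∈ insert (x, y) A, ∀ q ∈ insert (x, y) A,
        (0 : ℝ) ≤ ⟪q.2 - p.2, q.1 - p.1⟫ := by
      rintro p (rfl | hp) q (rfl | hq)
      · simp
      · exact hkey q hq
      · have := hkey p hp
        rw [show (x, y).2 - p.2 = -(p.2 - y) by simp, show (x, y).1 - p.1 = -(p.1 - x) by simp,
          inner_neg_neg]
        exact this
      · exact hAmono p hp q hq
    have := hAmax _ hmono (Set.subset_insert _ _)
    rw [← this]
    exact Set.mem_insert _ _
  · -- (x, -y) ∈ B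
    have hkey : ∀ r ∈ B, (0 : ℝ) ≤ ⟪r.2 - (-y), r.1 - x⟫ := by
      intro r hr
      have hclu := hcluster (r.1 - x)
      -- want : ⟪y, r.1-x⟫ ≥ -⟪r.2, r.1-x⟫, i.e. -⟪y,c⟫ ≤ ⟪r.2,c⟫
      have hclu' : ClusterPt (-(⟪y, r.1 - x⟫ : ℝ))
          (Filter.map (fun n => -(⟪y₁ n, r.1 - x⟫ : ℝ)) Filter.atTop) := by
        have hcont : ContinuousAt (fun t : ℝ => -t) (⟪y, r.1 - x⟫ : ℝ) :=
          continuous_neg.continuousAt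
        have := hclu.map hcont (Filter.tendsto_map (f := fun t : ℝ => -t))
        rwa [Filter.map_map] at this
      have hev : ∀ δ > 0, ∀ᶠ n in Filter.atTop,
          -(⟪y₁ n, r.1 - x⟫ : ℝ) ≤ ⟪r.2, r.1 - x⟫ + δ := by
        intro δ hδ
        have heps : ∀ᶠ n in Filter.atTop, eps n < δ / 2 :=
          heps0.eventually (eventually_lt_nhds (by linarith))
        have hsum : Filter.Tendsto (fun n => (⟪y₁ n + y₂ n, r.1 - x⟫ : ℝ))
            Filter.atTop (nhds 0) := by
          have := Filter.Tendsto.inner (𝕜 := ℝ) hconv (tendsto_const_nhds (x := r.1 - x))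
          simpa using this
        have hsum' : ∀ᶠ n in Filter.atTop, |(⟪y₁ n + y₂ n, r.1 - x⟫ : ℝ)| < δ / 2 := by
          have := hsum.eventually (eventually_abs_sub_lt 0 (show (0:ℝ) < δ/2 by linarith))
          simpa using this
        filter_upwards [heps, hsum'] with n hn hsn
        have h1 := hy₂ n r hr
        rw [inner_sub_left] at h1
        have h2 : (⟪y₂ n, r.1 - x⟫ : ℝ) = ⟪y₁ n + y₂ n, r.1 - x⟫ - ⟪y₁ n, r.1 - x⟫ := by
          rw [inner_add_left]; ring
        have habs := abs_lt.1 hsn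
        -- h1 : ⟪r.2, c⟫ - ⟪y₂ n, c⟫ ≥ -eps n
        linarith
      have := cluster_le_aux hclu' hev
      rw [inner_sub_left, inner_neg_left]
      linarith
    have hmono : ∀ p ∈ insert (x, -y) B, ∀ q ∈ insert (x, -y) B,
        (0 : ℝ) ≤ ⟪q.2 - p.2, q.1 - p.1⟫ := by
      rintro p (rfl | hp) q (rfl | hq)
      · simp
      · exact hkey q hq
      · have := hkey p hp
        rw [show (x, -y).2 - p.2 = -(p.2 - (-y)) by show -y - p.2 = -(p.2 - -y); abel,
          show (x, -y).1 - p.1 = -(p.1 - x) by show x - p.1 = -(p.1 - x); abel,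
          inner_neg_neg]
        exact this
      · exact hBmono p hp q hq
    have := hBmax _ hmono (Set.subset_insert _ _)
    rw [← this]
    exact Set.mem_insert _ _
end

section
/- Let f : ℝ → ℝ ∪ {+∞} be defined by f(x) = -√x for x ≥ 0 and f(x) = +∞ otherwise. Then f is proper, convex, and lower semicontinuous, and for every ε > 0, the ε-subdifferential of f at 0 is ∂_ε f(0) = (-∞, -1/(4ε)]. -/
/-- the function f(x) = -√x for x ≥ 0, +∞ otherwise, is proper,
convex and lower semicontinuous, and ∂_ε f(0) = (-∞, -1/(4ε)] for every ε > 0. -/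
theorem stmt_9 (f : ℝ → EReal)
    (hf : ∀ x : ℝ, f x = if 0 ≤ x then ((-Real.sqrt x : ℝ) : EReal) else ⊤) :
    (∃ x, f x ≠ ⊤) ∧ (∀ x, f x ≠ ⊥) ∧
    (∀ x y : ℝ, ∀ a b : ℝ, 0 ≤ a → 0 ≤ b → a + b = 1 →
      f (a * x + b * y) ≤ (a : EReal) * f x + (b : EReal) * f y) ∧
    LowerSemicontinuous f ∧
    (∀ ε : ℝ, 0 < ε →
      {u : ℝ | ∀ y : ℝ, f 0 + ((u * (y - 0) : ℝ) : EReal) ≤ f y + (ε : EReal)} =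
        Set.Iic (-(1 / (4 * ε)))) := by
  have hnb : ∀ x, f x ≠ ⊥ := by
    intro x
    rw [hf x]
    split_ifs
    · exact EReal.coe_ne_bot _
    · exact top_ne_bot
  have hmulnb : ∀ (c : ℝ) (x : ℝ), 0 ≤ c → (c : EReal) * f x ≠ ⊥ := by
    intro c x hc
    rw [hf x]
    split_ifs
    · rw [← EReal.coe_mul]; exact EReal.coe_ne_bot _
    · rcases eq_or_lt_of_le hc with h | h
      · rw [← h]; simp
      · rw [EReal.coe_mul_top_of_pos h]; exact top_ne_bot
  refine ⟨⟨0, by rw [hf 0]; simp⟩, hnb, ?_, ?_, ?_⟩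
  · -- convexity
    intro x y a b ha hb hab
    by_cases hx : 0 ≤ x
    · by_cases hy : 0 ≤ y
      · have hxy : 0 ≤ a * x + b * y := by positivity
        rw [hf x, hf y, hf (a * x + b * y), if_pos hx, if_pos hy, if_pos hxy,
          ← EReal.coe_mul, ← EReal.coe_mul, ← EReal.coe_add, EReal.coe_le_coe_iff]
        have key := Real.strictConcaveOn_sqrt.concaveOn.2 (Set.mem_Ici.mpr hx)
          (Set.mem_Ici.mpr hy) ha hb hab
        simp only [smul_eq_mul] at key
        linarith
      · -- y < 0, f y = ⊤
        rcases eq_or_lt_of_le hb with h | hbpos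
        · obtain rfl : b = 0 := h.symm
          obtain rfl : a = 1 := by linarith
          simp [EReal.zero_mul]
        · have h2 : (b : EReal) * f y = ⊤ := by
            rw [hf y, if_neg hy, EReal.coe_mul_top_of_pos hbpos]
          rw [h2, EReal.add_top_of_ne_bot (hmulnb a x ha)]
          exact le_top
    · -- x < 0, f x = ⊤
      rcases eq_or_lt_of_le ha with h | hapos
      · obtain rfl : a = 0 := h.symm
        obtain rfl : b = 1 := by linarith
        simp [EReal.zero_mul]
      · have h2 : (a : EReal) * f x = ⊤ := by
          rw [hf x, if_neg hx, EReal.coe_mul_top_of_pos hapos]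
        rw [h2, EReal.top_add_of_ne_bot (hmulnb b y hb)]
        exact le_top
  · -- LSC
    have hg : Continuous (fun x : ℝ => ((-Real.sqrt x : ℝ) : EReal)) := by
      exact continuous_coe_real_ereal.comp (Real.continuous_sqrt.neg)
    intro x
    by_cases hx : 0 ≤ x
    · intro t ht
      rw [hf x, if_pos hx] at ht
      have := (hg.lowerSemicontinuous x) t ht
      filter_upwards [this] with x' h'
      rw [hf x']
      split_ifs with h0
      · exact h'
      · exact lt_of_lt_of_le h' le_top
    · intro t ht
      have hmem : Set.Iio (0:ℝ) ∈ nhds x := isOpen_Iio.mem_nhds (lt_of_not_ge hx)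
      filter_upwards [hmem] with x' h'
      rw [hf x', if_neg (not_le.mpr h')]
      exact ht.trans_le (by rw [hf x, if_neg hx])
  · -- subdifferential
    intro ε hε
    ext u
    simp only [Set.mem_setOf_eq, Set.mem_Iic]
    constructor
    · intro h
      have h' := h (4 * ε ^ 2)
      rw [hf 0, hf (4 * ε ^ 2), if_pos le_rfl, if_pos (by positivity),
        ← EReal.coe_add, ← EReal.coe_add, EReal.coe_le_coe_iff] at h'
      rw [show (4 * ε ^ 2 : ℝ) = (2 * ε) ^ 2 by ring, Real.sqrt_sq (by positivity),
        Real.sqrt_zero] at h'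
      rw [show -(1 / (4 * ε)) = (-ε) / (4 * ε ^ 2) by field_simp]
      rw [le_div_iff₀ (by positivity)]
      nlinarith
    · intro hu y
      by_cases hy : 0 ≤ y
      · rw [hf 0, hf y, if_pos le_rfl, if_pos hy,
          ← EReal.coe_add, ← EReal.coe_add, EReal.coe_le_coe_iff, Real.sqrt_zero]
        have h4 : 4 * ε * (1 / (4 * ε)) = 1 := by field_simp
        nlinarith [sq_nonneg (Real.sqrt y - 2 * ε), Real.sq_sqrt hy,
          Real.sqrt_nonneg y, mul_le_mul_of_nonneg_right hu hy]
      · rw [hf y, if_neg hy, EReal.top_add_coe]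
        exact le_top
end

section
/- Let A, B be maximal monotone on a real Hilbert space H, ε > 0, εₙ > 0, λₙ > 0, and suppose x₊ = (I + λₙ A)^{-1}(xₙ - λₙ uₙ) with uₙ ∈ B^{εₙ} xₙ. Let x ∈ H, y₁ ∈ A^ε x, y₂ ∈ B^ε x and y_ε = y₁ + y₂. Then 2λₙ⟨y_ε, xₙ - x⟩ ≤ ‖xₙ - x‖² - ‖x₊ - x‖² + λₙ²‖uₙ + y₁‖² + 6λₙε + 4λₙεₙ. -/
open RealInnerProductSpace

private lemma mid_inner_id {H : Type*} [NormedAddCommGroup H] [InnerProductSpace ℝ H]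
    (u v w x₁ x₂ z : H) :
    ⟪((1:ℝ)/2) • (u + v) - w, ((1:ℝ)/2) • (x₁ + x₂) - z⟫ =
      (1/2) * ⟪u - w, x₁ - z⟫ + (1/2) * ⟪v - w, x₂ - z⟫ - (1/4) * ⟪u - v, x₁ - x₂⟫ := by
  simp only [inner_sub_left, inner_sub_right, inner_add_left, inner_add_right,
    real_inner_smul_left, real_inner_smul_right]
  ring

private lemma flip_inner {H : Type*} [NormedAddCommGroup H] [InnerProductSpace ℝ H]
    (a b c d : H) : ⟪a - b, c - d⟫ = ⟪b - a, d - c⟫ := by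
  rw [← inner_neg_neg, neg_sub, neg_sub]

/-- Transportation inequality with the crude constant 2. -/
private lemma transport {H : Type*} [NormedAddCommGroup H] [InnerProductSpace ℝ H]
    (B : Set (H × H))
    (hBmono : ∀ p ∈ B, ∀ q ∈ B, 0 ≤ ⟪q.2 - p.2, q.1 - p.1⟫)
    (hBmax : ∀ S : Set (H × H),
      (∀ p ∈ S, ∀ q ∈ S, 0 ≤ ⟪q.2 - p.2, q.1 - p.1⟫) → B ⊆ S → S = B)
    (ε₁ ε₂ : ℝ) (x₁ u x₂ v : H)
    (hu : ∀ r ∈ B, ⟪r.2 - u, r.1 - x₁⟫ ≥ -ε₁)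
    (hv : ∀ r ∈ B, ⟪r.2 - v, r.1 - x₂⟫ ≥ -ε₂) :
    ⟪u - v, x₁ - x₂⟫ ≥ -(2 * (ε₁ + ε₂)) := by
  by_contra h
  push_neg at h
  set xm : H := ((1:ℝ)/2) • (x₁ + x₂) with hxm
  set um : H := ((1:ℝ)/2) • (u + v) with hum
  have key : ∀ r ∈ B, 0 < ⟪um - r.2, xm - r.1⟫ := by
    intro r hr
    have h1 : ⟪u - r.2, x₁ - r.1⟫ ≥ -ε₁ := by
      rw [flip_inner]; exact hu r hr
    have h2 : ⟪v - r.2, x₂ - r.1⟫ ≥ -ε₂ := by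
      rw [flip_inner]; exact hv r hr
    rw [hum, hxm, mid_inner_id]
    linarith
  have hmono : ∀ p ∈ insert (xm, um) B, ∀ q ∈ insert (xm, um) B,
      0 ≤ ⟪q.2 - p.2, q.1 - p.1⟫ := by
    intro p hp q hq
    rcases hp with hp | hp <;> rcases hq with hq | hq
    · subst hp; subst hq; simp
    · subst hp
      rw [flip_inner]
      exact le_of_lt (key q hq)
    · subst hq
      exact le_of_lt (key p hp)
    · exact hBmono p hp q hq
  have hSB := hBmax _ hmono (Set.subset_insert _ _)
  have hmem : (xm, um) ∈ B := by
    rw [← hSB]; exact Set.mem_insert _ _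
  have := key (xm, um) hmem
  simp at this

/-- the key one-step estimate (inequality (9) of the paper) for
the extended forward-backward algorithm. The resolvent step
`x₊ = (I + λₙA)⁻¹(xₙ - λₙuₙ)` is expressed by the membership
`(x₊, λₙ⁻¹ • (xₙ - λₙ • uₙ - x₊)) ∈ A`. -/
theorem stmt_14 {H : Type*} [NormedAddCommGroup H] [InnerProductSpace ℝ H] [CompleteSpace H]
    (A B : Set (H × H))
    (hAmono : ∀ p ∈ A, ∀ q ∈ A, 0 ≤ ⟪q.2 - p.2, q.1 - p.1⟫)
    (hAmax : ∀ S : Set (H × H),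
      (∀ p ∈ S, ∀ q ∈ S, 0 ≤ ⟪q.2 - p.2, q.1 - p.1⟫) → A ⊆ S → S = A)
    (hBmono : ∀ p ∈ B, ∀ q ∈ B, 0 ≤ ⟪q.2 - p.2, q.1 - p.1⟫)
    (hBmax : ∀ S : Set (H × H),
      (∀ p ∈ S, ∀ q ∈ S, 0 ≤ ⟪q.2 - p.2, q.1 - p.1⟫) → B ⊆ S → S = B)
    (ε εn lamn : ℝ) (hε : 0 < ε) (hεn : 0 < εn) (hlamn : 0 < lamn)
    (xn un xp : H)
    (hun : ∀ r ∈ B, ⟪r.2 - un, r.1 - xn⟫ ≥ -εn)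
    (hxp : (xp, lamn⁻¹ • (xn - lamn • un - xp)) ∈ A)
    (x y₁ y₂ : H)
    (hy₁ : ∀ r ∈ A, ⟪r.2 - y₁, r.1 - x⟫ ≥ -ε)
    (hy₂ : ∀ r ∈ B, ⟪r.2 - y₂, r.1 - x⟫ ≥ -ε) :
    2 * lamn * ⟪y₁ + y₂, xn - x⟫ ≤
      ‖xn - x‖ ^ 2 - ‖xp - x‖ ^ 2 + lamn ^ 2 * ‖un + y₁‖ ^ 2
        + 6 * lamn * ε + 4 * lamn * εn := by
  set a : H := xn - xp with ha
  set d : H := un + y₁ with hd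
  set e : H := xp - x with he
  -- resolvent inequality, from hy₁
  have h1 : ⟪lamn⁻¹ • (xn - lamn • un - xp) - y₁, xp - x⟫ ≥ -ε := hy₁ _ hxp
  have hF1 : ⟪a, e⟫ - lamn * ⟪d, e⟫ ≥ -(lamn * ε) := by
    have := mul_le_mul_of_nonneg_left h1 (le_of_lt hlamn)
    have expand : lamn * ⟪lamn⁻¹ • (xn - lamn • un - xp) - y₁, xp - x⟫
        = ⟪a, e⟫ - lamn * ⟪d, e⟫ := by
      rw [inner_sub_left, real_inner_smul_left, ha, hd, he]
      rw [inner_sub_left, inner_sub_left, inner_add_left, real_inner_smul_left]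
      rw [inner_sub_left]
      field_simp
      ring
    rw [expand] at this
    linarith [this]
  -- norm identity: xn - x = a + e
  have hF2 : ‖xn - x‖ ^ 2 = ‖a‖ ^ 2 + 2 * ⟪a, e⟫ + ‖e‖ ^ 2 := by
    have : xn - x = a + e := by rw [ha, he]; abel
    rw [this, norm_add_sq_real]
  -- Young: 2 lamn ⟪d, a⟫ ≤ lamn² ‖d‖² + ‖a‖²
  have hF3 : 2 * (lamn * ⟪d, a⟫) ≤ lamn ^ 2 * ‖d‖ ^ 2 + ‖a‖ ^ 2 := by
    have h0 : (0:ℝ) ≤ ‖lamn • d - a‖ ^ 2 := sq_nonneg _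
    rw [norm_sub_sq_real, real_inner_smul_left, norm_smul] at h0
    simp only [Real.norm_eq_abs, abs_of_pos hlamn] at h0
    nlinarith [h0]
  -- transportation
  have hF4 : ⟪un - y₂, xn - x⟫ ≥ -(2 * (εn + ε)) :=
    transport B hBmono hBmax εn ε xn un x y₂ hun hy₂
  -- linearity decompositions
  have hF5 : ⟪d, xn - x⟫ = ⟪y₁ + y₂, xn - x⟫ + ⟪un - y₂, xn - x⟫ := by
    rw [hd, ← inner_add_left]
    congr 1
    abel
  have hF6 : ⟪d, e⟫ = ⟪d, xn - x⟫ - ⟪d, a⟫ := by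
    rw [he, ha, ← inner_sub_right]
    congr 1
    abel
  nlinarith [mul_le_mul_of_nonneg_left hF4 (le_of_lt hlamn), hF1, hF2, hF3, hF5, hF6,
    mul_pos hlamn hε, mul_pos hlamn hεn]
end
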